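/- For n ≥ 4 and s ≥ 1, every monomial in the (s(n-2))-th symbolic power of the Stanley-Reisner ideal I_{B_n} of the bipyramid B_n has degree at least sn, where I_{B_n}^{(m)} = ⋂_{u ∈ {0,n+1}} ⋂_{i=1}^{n} ⟨x_u, x_i, ..., x_{i+n-3}⟩^m. -/

import Mathlib

/-!
Specialising the generators of a monomial prime `P = ⟨x_j : j ∈ F⟩` to `t` and every other
variable to `1` maps `P ^ m` into `⟨t ^ m⟩`, so a monomial `x ^ a` in `P ^ m` has
`∑_{j ∈ F} a_j ≥ m`. Averaging these bounds over the `n` cyclic windows `T_i` gives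
`n m ≤ n a_u + (n - 2) A` for each apex `u ∈ {0, n + 1}`, where `A` is the degree of `x ^ a` in
`x_1, …, x_n`. For `m = s (n - 2)` the two apex bounds add up to
`n (a_0 + a_{n+1} + A) ≥ 2 n s (n - 2) - (n - 4) A`, which is at least `n · s n` when `A ≤ s n`
because `n ≥ 4`; if `A > s n` there is nothing to prove.
-/

open MvPolynomial Finset

theorem MvPolynomial.le_sum_of_monomial_mem_span_X_image_pow {σ R : Type*} [CommSemiring R]
    {F : Finset σ} {m : ℕ} {a : σ →₀ ℕ} {c : R} (hc : c ≠ 0)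
    (h : monomial a c ∈ Ideal.span (X '' (F : Set σ)) ^ m) : m ≤ ∑ j ∈ F, a j := by
  classical
  let φ : MvPolynomial σ R →ₐ[R] Polynomial R :=
    aeval fun j => if j ∈ F then Polynomial.X else 1
  have hspan : Ideal.map φ (Ideal.span (X '' F)) ≤ Ideal.span {Polynomial.X} := by
    rw [Ideal.map_span, Ideal.span_le]
    rintro _ ⟨_, ⟨j, hj, rfl⟩, rfl⟩
    simp [φ, Finset.mem_coe.mp hj]
  have hmem : φ (monomial a c) ∈ Ideal.span {Polynomial.X ^ m} := by
    have h' := Ideal.mem_map_of_mem φ h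
    rw [Ideal.map_pow] at h'
    rw [← Ideal.span_singleton_pow]
    exact Ideal.pow_right_mono hspan m h'
  have hφ : φ (monomial a c) =
      Polynomial.C c * Polynomial.X ^ ∑ j ∈ a.support with j ∈ F, a j := by
    simp only [φ, aeval_monomial, Polynomial.algebraMap_eq, Finsupp.prod, sum_filter,
      ← prod_pow_eq_pow_sum]
    congr 1
    exact prod_congr rfl fun j _ => by split_ifs <;> simp
  rw [hφ, Ideal.mem_span_singleton] at hmem
  calc m ≤ ∑ j ∈ a.support with j ∈ F, a j := by
        by_contra! hlt
        have := Polynomial.X_pow_dvd_iff.mp hmem _ hlt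
        simp [Polynomial.coeff_C_mul] at this
        exact hc this
    _ ≤ ∑ j ∈ F, a j := by
        rw [filter_mem_eq_inter]
        exact sum_le_sum_of_subset inter_subset_right

theorem MvPolynomial.le_add_sum_of_monomial_mem_span_pow {σ R : Type*} [CommSemiring R]
    {x : σ} {g : ℕ → σ} {w m : ℕ} {a : σ →₀ ℕ} {c : R} (hc : c ≠ 0)
    (h : monomial a c ∈ Ideal.span ({X x} ∪ {p | ∃ k < w, p = X (g k)}) ^ m) :
    m ≤ a x + ∑ k ∈ range w, a (g k) := by
  classical
  have hspan : Ideal.span ({X x} ∪ {p | ∃ k < w, p = X (g k)}) ≤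
      Ideal.span (X '' ↑(insert x ((range w).image g)) : Set (MvPolynomial σ R)) := by
    refine Ideal.span_mono ?_
    rintro _ (rfl | ⟨k, hk, rfl⟩)
    · exact ⟨x, mem_insert_self _ _, rfl⟩
    · exact ⟨g k, mem_insert_of_mem (mem_image_of_mem g (mem_range.mpr hk)), rfl⟩
  calc m ≤ ∑ j ∈ insert x ((range w).image g), a j :=
        le_sum_of_monomial_mem_span_X_image_pow hc (Ideal.pow_right_mono hspan m h)
    _ ≤ a x + ∑ j ∈ (range w).image g, a j := by
        rw [insert_eq, ← sum_singleton a x]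
        exact le_self_add.trans sum_union_inter.le
    _ ≤ a x + ∑ k ∈ range w, a (g k) := by
        gcongr
        exact sum_image_le_of_nonneg fun _ _ => Nat.zero_le _

theorem Finset.sum_range_add_mod {M : Type*} [AddCommMonoid M] (f : ℕ → M) (n k : ℕ) :
    ∑ i ∈ range n, f ((i + k) % n) = ∑ i ∈ range n, f i := by
  rcases Nat.eq_zero_or_pos n with rfl | hn
  · simp
  have : NeZero n := ⟨hn.ne'⟩
  rw [← Fin.sum_univ_eq_sum_range, ← Fin.sum_univ_eq_sum_range]
  exact Fintype.sum_equiv (Equiv.addRight (Fin.ofNat n k)) _ _ fun i => by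
    simp [Fin.val_add]

theorem Nat.mul_le_mul_add_mul_sum_of_cyclic_windows {n w m c : ℕ} {b : ℕ → ℕ}
    (h : ∀ i < n, m ≤ c + ∑ k ∈ range w, b ((i + k) % n)) :
    n * m ≤ n * c + w * ∑ i ∈ range n, b i :=
  calc n * m = ∑ i ∈ range n, m := by simp
    _ ≤ ∑ i ∈ range n, (c + ∑ k ∈ range w, b ((i + k) % n)) :=
        sum_le_sum fun i hi => h i (mem_range.mp hi)
    _ = n * c + w * ∑ i ∈ range n, b i := by
        rw [sum_add_distrib, sum_comm]
        simp [sum_range_add_mod]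

theorem Fin.sum_univ_eq_sum_range_of_val_eq_mod {M : Type*} [AddCommMonoid M] {N : ℕ}
    (f : Fin N → M) {e : ℕ → Fin N} (he : ∀ k, (e k : ℕ) = k % N) :
    ∑ j, f j = ∑ t ∈ range N, f (e t) := by
  rw [← Fin.sum_univ_eq_sum_range (fun t => f (e t))]
  exact sum_congr rfl fun j _ => congrArg f (Fin.ext (by rw [he, Nat.mod_eq_of_lt j.isLt]))

theorem Nat.mul_le_add_add_of_apex_bounds {n s x y A : ℕ} (hn : 4 ≤ n)
    (hx : n * (s * (n - 2)) ≤ n * x + (n - 2) * A)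
    (hy : n * (s * (n - 2)) ≤ n * y + (n - 2) * A) :
    s * n ≤ x + y + A := by
  rcases le_or_gt (s * n) A with hA | hA
  · omega
  obtain ⟨q, rfl⟩ : ∃ q, n = q + 4 := ⟨n - 4, by omega⟩
  rw [show q + 4 - 2 = q + 2 by omega] at hx hy
  nlinarith [Nat.mul_le_mul_left q hA.le]

theorem stmt4_general (K : Type*) [Field K] (n s : ℕ) (hn : 4 ≤ n)
    (e : ℕ → Fin (n + 2)) (he : ∀ k, (e k : ℕ) = k % (n + 2))
    (a : Fin (n + 2) →₀ ℕ) (c : K) (hc : c ≠ 0)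
    (hmem : (monomial a c : MvPolynomial (Fin (n + 2)) K) ∈
      ⨅ u ∈ ({0, n + 1} : Finset ℕ), ⨅ i ∈ Finset.Icc 1 n,
        (Ideal.span ({X (e u)} ∪
          {p | ∃ k < n - 2, p = (X (e ((i + k - 1) % n + 1)) : MvPolynomial (Fin (n + 2)) K)}))
          ^ (s * (n - 2))) :
    s * n ≤ ∑ j, a j := by
  simp only [Submodule.mem_iInf] at hmem
  have hwindow : ∀ u ∈ ({0, n + 1} : Finset ℕ), ∀ i < n,
      s * (n - 2) ≤ a (e u) + ∑ k ∈ range (n - 2), a (e ((i + k) % n + 1)) := by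
    intro u hu i hi
    have hprime := hmem u hu (i + 1) (mem_Icc.mpr ⟨by omega, hi⟩)
    simp only [Nat.add_right_comm i 1, Nat.add_sub_cancel] at hprime
    exact le_add_sum_of_monomial_mem_span_pow hc hprime
  have hapex (u) (hu : u ∈ ({0, n + 1} : Finset ℕ)) :=
    Nat.mul_le_mul_add_mul_sum_of_cyclic_windows (b := fun i => a (e (i + 1))) (hwindow u hu)
  rw [Fin.sum_univ_eq_sum_range_of_val_eq_mod _ he, sum_range_succ, sum_range_succ']
  have := Nat.mul_le_add_add_of_apex_bounds hn (hapex 0 (by simp)) (hapex (n + 1) (by simp))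
  omega

/-- For `n ≥ 4` and `s ≥ 1`, every monomial in the `(s(n-2))`-th symbolic power of the
Stanley-Reisner ideal `I_{B_n}` of the bipyramid `B_n`, that is, in
`⋂_{u ∈ {0,n+1}} ⋂_{i=1}^{n} ⟨x_u, x_i, …, x_{i+n-3}⟩^(s(n-2))`, has degree at least `sn`. -/
theorem stmt4 (K : Type*) [Field K] (n s : ℕ) (hn : 4 ≤ n) (hs : 1 ≤ s)
    (e : ℕ → Fin (n + 2)) (he : ∀ k, (e k : ℕ) = k % (n + 2))
    (a : Fin (n + 2) →₀ ℕ) (c : K) (hc : c ≠ 0)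
    (hmem : (monomial a c : MvPolynomial (Fin (n + 2)) K) ∈
      ⨅ u ∈ ({0, n + 1} : Finset ℕ), ⨅ i ∈ Finset.Icc 1 n,
        (Ideal.span ({X (e u)} ∪
          {p | ∃ k < n - 2, p = (X (e ((i + k - 1) % n + 1)) : MvPolynomial (Fin (n + 2)) K)}))
          ^ (s * (n - 2))) :
    s * n ≤ ∑ j, a j :=
  stmt4_general K n s hn e he a c hc hmem
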